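/- Let U ⊆ ℝ^n be open, f : U → ℝ^m be C¹ with m ≥ n, and let E ⊆ U be a closed Lebesgue-null set. Then the set of 'S-singular values' of f, namely f(E) ∪ {f(x) : x ∈ U \ E, Df(x) is not injective}, is Lebesgue-null in ℝ^m. -/

import Mathlib

/-!
A linear surjection `π : ℝ^m → ℝ^n` reduces everything to self-maps of `ℝ^m`: `f` and `f ∘ π`
have the same images of `s` and `π⁻¹ s`, preimages under `π` of null sets are null, and
`D(f ∘ π) = Df ∘ π` is singular wherever `Df` fails to be injective. The two classical facts for
differentiable self-maps, that they send null sets to null sets and that the image of the set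
where the Jacobian vanishes is null, then give the two halves of the claim.
-/

open MeasureTheory Set ENNReal
noncomputable section

abbrev E (n : ℕ) := EuclideanSpace ℝ (Fin n)

open Module Function

section

variable {V W : Type*} [NormedAddCommGroup V] [NormedSpace ℝ V]
  [NormedAddCommGroup W] [NormedSpace ℝ W] [FiniteDimensional ℝ W]

theorem ContinuousLinearMap.exists_surjective_of_finrank_le [FiniteDimensional ℝ V]
    (h : finrank ℝ V ≤ finrank ℝ W) : ∃ π : W →L[ℝ] V, Surjective π := by
  obtain ⟨ι, hι⟩ := (finrank_le_iff_exists_linearMap (R := ℝ)).1 h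
  obtain ⟨π, hπ⟩ := ι.exists_leftInverse_of_injective (LinearMap.ker_eq_bot.2 hι)
  exact ⟨LinearMap.toContinuousLinearMap π, fun x => ⟨ι x, LinearMap.congr_fun hπ x⟩⟩

theorem ContinuousLinearMap.det_comp_eq_zero_of_not_injective {A : V →L[ℝ] W}
    (hA : ¬ Injective A) {π : W →L[ℝ] V} (hπ : Surjective π) : (A.comp π).det = 0 :=
  LinearMap.det_eq_zero_iff_ker_ne_bot.2 fun hker => by
    have hAπ : Injective (A ∘ π) := LinearMap.ker_eq_bot.1 hker
    exact hA (hAπ.of_comp_right hπ)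

variable [MeasurableSpace W] [BorelSpace W]

theorem addHaar_image_setOf_not_injective_eq_zero [FiniteDimensional ℝ V] (μ : Measure W)
    [μ.IsAddHaarMeasure] (h : finrank ℝ V ≤ finrank ℝ W) {f : V → W} {f' : V → V →L[ℝ] W}
    {s : Set V} (hf' : ∀ x ∈ s, HasFDerivWithinAt f (f' x) s x) :
    μ (f '' {x ∈ s | ¬ Injective (f' x)}) = 0 := by
  obtain ⟨π, hπ⟩ := ContinuousLinearMap.exists_surjective_of_finrank_le h
  set t := {x ∈ s | ¬ Injective (f' x)}
  rw [← image_preimage_eq t hπ, ← image_comp]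
  refine addHaar_image_eq_zero_of_det_fderivWithin_eq_zero μ
    (f' := fun y => (f' (π y)).comp π) (fun y hy => ?_) fun y hy =>
      ContinuousLinearMap.det_comp_eq_zero_of_not_injective hy.2 hπ
  exact ((hf' _ hy.1).mono (sep_subset _ _)).comp y π.hasFDerivWithinAt (mapsTo_preimage π t)

variable [MeasurableSpace V] [BorelSpace V]

theorem ContinuousLinearMap.addHaar_preimage_eq_zero_of_surjective (μ : Measure W)
    [μ.IsAddHaarMeasure] {ν : Measure V} [ν.IsAddHaarMeasure] {π : W →L[ℝ] V}
    (hπ : Surjective π) {s : Set V} (hs : ν s = 0) : μ (π ⁻¹' s) = 0 := by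
  obtain ⟨c, -, hc⟩ := (π : W →ₗ[ℝ] V).exists_map_addHaar_eq_smul_addHaar μ ν hπ
  refine Measure.preimage_null_of_map_null π.continuous.aemeasurable ?_
  rw [← coe_coe, hc, Measure.smul_apply, hs, smul_zero]

theorem addHaar_image_eq_zero_of_differentiableOn_of_finrank_le [FiniteDimensional ℝ V]
    (μ : Measure W) [μ.IsAddHaarMeasure] {ν : Measure V} [ν.IsAddHaarMeasure]
    (h : finrank ℝ V ≤ finrank ℝ W) {f : V → W} {s : Set V} (hf : DifferentiableOn ℝ f s)
    (hs : ν s = 0) : μ (f '' s) = 0 := by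
  obtain ⟨π, hπ⟩ := ContinuousLinearMap.exists_surjective_of_finrank_le h
  rw [← image_preimage_eq s hπ, ← image_comp]
  exact addHaar_image_eq_zero_of_differentiableOn_of_addHaar_eq_zero μ
    (hf.comp π.differentiableOn (mapsTo_preimage π s))
    (π.addHaar_preimage_eq_zero_of_surjective μ hπ hs)

end

theorem stmt19 (n m : ℕ) (hnm : n ≤ m) (U : Set (E n)) (hU : IsOpen U)
    (f : E n → E m) (hf : ContDiffOn ℝ 1 f U)
    (Eset : Set (E n)) (hEU : Eset ⊆ U)
    (hEnull : volume Eset = 0) :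
    volume (f '' Eset ∪
      f '' {x ∈ U \ Eset | ¬ Function.Injective (fderiv ℝ f x)}) = 0 := by
  have hdim : finrank ℝ (E n) ≤ finrank ℝ (E m) := by simpa using hnm
  have hdiff : DifferentiableOn ℝ f U := hf.differentiableOn one_ne_zero
  refine measure_union_null
    (addHaar_image_eq_zero_of_differentiableOn_of_finrank_le volume hdim (hdiff.mono hEU) hEnull) ?_
  refine addHaar_image_setOf_not_injective_eq_zero volume hdim fun x hx => ?_
  exact (hdiff.differentiableAt (hU.mem_nhds hx.1)).hasFDerivAt.hasFDerivWithinAt
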